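/- Let U₁ and U₂ be finite-dimensional real inner product spaces, Z a real vector space, and L₁ : U₁ → Z, L₂ : U₂ → Z linear maps with equal ranges, L₁(U₁) = L₂(U₂). Let S = {(u₁, u₂) ∈ U₁ × U₂ | L₁(u₁) = L₂(u₂)}, and for i = 1,2 let Pᵢ : Uᵢ → (ker Lᵢ)^⊥ be the orthogonal projections. Call a pair of functionals (φ₁, φ₂) ∈ U₁* × U₂* compatible if φ₁(P₁ u₁) = φ₂(P₂ u₂) for every (u₁, u₂) ∈ S. Then the linear map sending a compatible pair (φ₁, φ₂) to the restriction to S of the functional (u₁, u₂) ↦ φ₁(u₁) + φ₂(u₂) is a linear isomorphism from the space of compatible pairs onto the dual space S*. -/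

import Mathlib

/-- Let `L₁ : U₁ → Z`, `L₂ : U₂ → Z` be linear maps with equal ranges from
finite-dimensional real inner product spaces, let `S = {(u₁,u₂) | L₁ u₁ = L₂ u₂}`, let
`Pᵢ` be the orthogonal projections onto `(ker Lᵢ)ᗮ`, and let `C` be the space of
compatible pairs of functionals `(φ₁, φ₂)` (those with `φ₁(P₁ u₁) = φ₂(P₂ u₂)` for all
`(u₁,u₂) ∈ S`).  Then `(φ₁, φ₂) ↦ ((u₁,u₂) ↦ φ₁ u₁ + φ₂ u₂)|_S` is a linear isomorphism
from `C` onto the dual space `S*`. -/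
theorem stmt18 {U₁ U₂ Z : Type*}
    [NormedAddCommGroup U₁] [InnerProductSpace ℝ U₁] [FiniteDimensional ℝ U₁]
    [NormedAddCommGroup U₂] [InnerProductSpace ℝ U₂] [FiniteDimensional ℝ U₂]
    [AddCommGroup Z] [Module ℝ Z]
    (L₁ : U₁ →ₗ[ℝ] Z) (L₂ : U₂ →ₗ[ℝ] Z)
    (hrange : LinearMap.range L₁ = LinearMap.range L₂)
    (S : Submodule ℝ (U₁ × U₂)) (hS : ∀ p : U₁ × U₂, p ∈ S ↔ L₁ p.1 = L₂ p.2)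
    (C : Submodule ℝ (Module.Dual ℝ U₁ × Module.Dual ℝ U₂))
    (hC : ∀ φ : Module.Dual ℝ U₁ × Module.Dual ℝ U₂, φ ∈ C ↔
      ∀ p : U₁ × U₂, p ∈ S →
        φ.1 ((Submodule.orthogonalProjectionOnto (LinearMap.ker L₁)ᗮ p.1 : U₁)) =
        φ.2 ((Submodule.orthogonalProjectionOnto (LinearMap.ker L₂)ᗮ p.2 : U₂))) :
    ∃ e : C ≃ₗ[ℝ] Module.Dual ℝ S,
      ∀ (φ : C) (p : S),
        e φ p = (φ : Module.Dual ℝ U₁ × Module.Dual ℝ U₂).1 (p : U₁ × U₂).1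
              + (φ : Module.Dual ℝ U₁ × Module.Dual ℝ U₂).2 (p : U₁ × U₂).2 := by
  classical
  set K₁ := (LinearMap.ker L₁)ᗮ with hK₁def
  set K₂ := (LinearMap.ker L₂)ᗮ with hK₂def
  -- the projected-away part lies in the kernel
  have hsub₁ : ∀ u : U₁, u - (Submodule.orthogonalProjectionOnto K₁ u : U₁) ∈ LinearMap.ker L₁ := by
    intro u
    have h := Submodule.sub_starProjection_mem_orthogonal (K := K₁) u
    have h2 : K₁ᗮ = LinearMap.ker L₁ := by rw [hK₁def, Submodule.orthogonal_orthogonal]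
    exact (SetLike.ext_iff.mp h2 _).mp h
  have hsub₂ : ∀ u : U₂, u - (Submodule.orthogonalProjectionOnto K₂ u : U₂) ∈ LinearMap.ker L₂ := by
    intro u
    have h := Submodule.sub_starProjection_mem_orthogonal (K := K₂) u
    have h2 : K₂ᗮ = LinearMap.ker L₂ := by rw [hK₂def, Submodule.orthogonal_orthogonal]
    exact (SetLike.ext_iff.mp h2 _).mp h
  have hproj₁ : ∀ u : U₁, L₁ (Submodule.orthogonalProjectionOnto K₁ u : U₁) = L₁ u := by
    intro u
    have h := LinearMap.mem_ker.mp (hsub₁ u)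
    rw [map_sub, sub_eq_zero] at h
    exact h.symm
  have hproj₂ : ∀ u : U₂, L₂ (Submodule.orthogonalProjectionOnto K₂ u : U₂) = L₂ u := by
    intro u
    have h := LinearMap.mem_ker.mp (hsub₂ u)
    rw [map_sub, sub_eq_zero] at h
    exact h.symm
  -- elements of K whose image is zero are zero
  have hz₁ : ∀ v : K₁, L₁ (v : U₁) = 0 → v = 0 := by
    intro v hv
    have h0 : (inner ℝ (v : U₁) (v : U₁) : ℝ) = 0 :=
      (Submodule.mem_orthogonal _ _).mp v.2 _ (LinearMap.mem_ker.mpr hv)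
    exact Subtype.ext (inner_self_eq_zero.mp h0)
  have hz₂ : ∀ v : K₂, L₂ (v : U₂) = 0 → v = 0 := by
    intro v hv
    have h0 : (inner ℝ (v : U₂) (v : U₂) : ℝ) = 0 :=
      (Submodule.mem_orthogonal _ _).mp v.2 _ (LinearMap.mem_ker.mpr hv)
    exact Subtype.ext (inner_self_eq_zero.mp h0)
  -- restricted maps to the range
  let r₁ : K₁ →ₗ[ℝ] LinearMap.range L₁ :=
    (L₁.comp K₁.subtype).codRestrict _ (fun v => LinearMap.mem_range_self _ _)
  let r₂ : K₂ →ₗ[ℝ] LinearMap.range L₂ :=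
    (L₂.comp K₂.subtype).codRestrict _ (fun v => LinearMap.mem_range_self _ _)
  have hr₁ : Function.Bijective r₁ := by
    constructor
    · intro v w h
      have : L₁ ((v - w : K₁) : U₁) = 0 := by
        have := congrArg Subtype.val h
        simp only [r₁, LinearMap.codRestrict_apply, LinearMap.comp_apply,
          Submodule.subtype_apply] at this
        simp [map_sub, this]
      have := hz₁ _ this
      rwa [sub_eq_zero] at this
    · rintro ⟨z, u, rfl⟩
      exact ⟨Submodule.orthogonalProjectionOnto K₁ u, Subtype.ext (by
        simp only [r₁, LinearMap.codRestrict_apply, LinearMap.comp_apply,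
          Submodule.subtype_apply]
        exact hproj₁ u)⟩
  have hr₂ : Function.Bijective r₂ := by
    constructor
    · intro v w h
      have : L₂ ((v - w : K₂) : U₂) = 0 := by
        have := congrArg Subtype.val h
        simp only [r₂, LinearMap.codRestrict_apply, LinearMap.comp_apply,
          Submodule.subtype_apply] at this
        simp [map_sub, this]
      have := hz₂ _ this
      rwa [sub_eq_zero] at this
    · rintro ⟨z, u, rfl⟩
      exact ⟨Submodule.orthogonalProjectionOnto K₂ u, Subtype.ext (by
        simp only [r₂, LinearMap.codRestrict_apply, LinearMap.comp_apply,
          Submodule.subtype_apply]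
        exact hproj₂ u)⟩
  let e₁ : K₁ ≃ₗ[ℝ] LinearMap.range L₁ := LinearEquiv.ofBijective r₁ hr₁
  let e₂ : K₂ ≃ₗ[ℝ] LinearMap.range L₂ := LinearEquiv.ofBijective r₂ hr₂
  let σ : K₁ ≃ₗ[ℝ] K₂ := e₁.trans ((LinearEquiv.ofEq _ _ hrange).trans e₂.symm)
  have hσ : ∀ v : K₁, L₂ ((σ v : K₂) : U₂) = L₁ ((v : K₁) : U₁) := by
    intro v
    have h : e₂ (σ v) = (LinearEquiv.ofEq _ _ hrange) (e₁ v) := by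
      simp [σ, LinearEquiv.trans_apply]
    have h2 := congrArg Subtype.val h
    simp only [e₁, e₂, LinearEquiv.ofBijective_apply, r₁, r₂,
      LinearMap.codRestrict_apply, LinearMap.comp_apply, Submodule.subtype_apply,
      LinearEquiv.coe_ofEq_apply] at h2
    exact h2
  have hσsymm : ∀ w : K₂, L₁ ((σ.symm w : K₁) : U₁) = L₂ ((w : K₂) : U₂) := by
    intro w
    have := hσ (σ.symm w)
    rw [σ.apply_symm_apply] at this
    exact this.symm
  -- σ matches the two projections on S
  have hσS : ∀ p : U₁ × U₂, p ∈ S →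
      σ (Submodule.orthogonalProjectionOnto K₁ p.1) = Submodule.orthogonalProjectionOnto K₂ p.2 := by
    intro p hp
    have hL : L₂ ((σ (Submodule.orthogonalProjectionOnto K₁ p.1) : K₂) : U₂)
        = L₂ ((Submodule.orthogonalProjectionOnto K₂ p.2 : K₂) : U₂) := by
      rw [hσ, hproj₁, hproj₂]
      exact (hS p).mp hp
    have : L₂ (((σ (Submodule.orthogonalProjectionOnto K₁ p.1) - Submodule.orthogonalProjectionOnto K₂ p.2 : K₂)) : U₂) = 0 := by
      simp [map_sub, hL]
    have := hz₂ _ this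
    rwa [sub_eq_zero] at this
  -- the forward map
  let F : (Module.Dual ℝ U₁ × Module.Dual ℝ U₂) →ₗ[ℝ] Module.Dual ℝ S :=
    { toFun := fun φ =>
        (φ.1.comp (LinearMap.fst ℝ U₁ U₂) + φ.2.comp (LinearMap.snd ℝ U₁ U₂)).comp S.subtype
      map_add' := fun φ ψ => by
        ext p
        simp only [LinearMap.comp_apply, LinearMap.add_apply, Prod.fst_add, Prod.snd_add]
        ring
      map_smul' := fun c φ => by
        ext p
        simp only [LinearMap.comp_apply, LinearMap.add_apply, LinearMap.smul_apply,
          Prod.smul_fst, Prod.smul_snd, RingHom.id_apply, smul_eq_mul]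
        ring }
    -- injectivity on C
  have hFapp : ∀ (φ : Module.Dual ℝ U₁ × Module.Dual ℝ U₂) (p : S),
      F φ p = φ.1 (p : U₁ × U₂).1 + φ.2 (p : U₁ × U₂).2 := fun φ p => rfl
  have hFinj : ∀ φ ∈ C, F φ = 0 → φ = 0 := by
    intro φ hφ h0
    have hzero : ∀ p ∈ S, φ.1 p.1 + φ.2 p.2 = 0 := by
      intro p hp
      have := DFunLike.congr_fun h0 (⟨p, hp⟩ : S)
      simpa [hFapp] using this
    have hk₁ : ∀ u ∈ LinearMap.ker L₁, φ.1 u = 0 := by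
      intro u hu
      have := hzero (u, 0) ((hS _).mpr (by simp [LinearMap.mem_ker.mp hu]))
      simpa using this
    have hk₂ : ∀ u ∈ LinearMap.ker L₂, φ.2 u = 0 := by
      intro u hu
      have := hzero (0, u) ((hS _).mpr (by simp [LinearMap.mem_ker.mp hu]))
      simpa using this
    have key : ∀ p ∈ S, φ.1 p.1 = 0 ∧ φ.2 p.2 = 0 := by
      intro p hp
      have hcomp := (hC φ).mp hφ p hp
      have e1 : φ.1 p.1 = φ.1 (Submodule.orthogonalProjectionOnto K₁ p.1 : U₁) := by
        have h := hk₁ _ (hsub₁ p.1)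
        rw [map_sub] at h
        linarith
      have e2 : φ.2 p.2 = φ.2 (Submodule.orthogonalProjectionOnto K₂ p.2 : U₂) := by
        have h := hk₂ _ (hsub₂ p.2)
        rw [map_sub] at h
        linarith
      have hsum := hzero p hp
      constructor <;> linarith [e1, e2, hcomp, hsum]
    have h1 : φ.1 = 0 := by
      ext u₁
      obtain ⟨u₂, hu₂⟩ : L₁ u₁ ∈ LinearMap.range L₂ := hrange ▸ LinearMap.mem_range_self _ _
      exact (key (u₁, u₂) ((hS _).mpr hu₂.symm)).1
    have h2 : φ.2 = 0 := by
      ext u₂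
      obtain ⟨u₁, hu₁⟩ : L₂ u₂ ∈ LinearMap.range L₁ := hrange.symm ▸ LinearMap.mem_range_self _ _
      exact (key (u₁, u₂) ((hS _).mpr hu₁)).2
    exact Prod.ext h1 h2
  -- surjectivity
  let P₁' : U₁ →ₗ[ℝ] K₁ := (Submodule.orthogonalProjectionOnto K₁).toLinearMap
  let P₂' : U₂ →ₗ[ℝ] K₂ := (Submodule.orthogonalProjectionOnto K₂).toLinearMap
  let A₁ : U₁ →ₗ[ℝ] S :=
    LinearMap.codRestrict S ((LinearMap.id - K₁.subtype ∘ₗ P₁').prod 0) (fun u => by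
      refine (hS _).mpr ?_
      simp
      exact (map_sub L₁ _ _).symm.trans (LinearMap.mem_ker.mp (hsub₁ u)))
  let A₂ : U₂ →ₗ[ℝ] S :=
    LinearMap.codRestrict S ((0 : U₂ →ₗ[ℝ] U₁).prod (LinearMap.id - K₂.subtype ∘ₗ P₂'))
      (fun u => by
      refine (hS _).mpr ?_
      simp
      exact ((map_sub L₂ _ _).symm.trans (LinearMap.mem_ker.mp (hsub₂ u))).symm)
  let B₁ : U₁ →ₗ[ℝ] S :=
    LinearMap.codRestrict S
      ((K₁.subtype ∘ₗ P₁').prod (K₂.subtype ∘ₗ σ.toLinearMap ∘ₗ P₁')) (fun u => by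
      refine (hS _).mpr ?_
      simpa using (hσ (P₁' u)).symm)
  let B₂ : U₂ →ₗ[ℝ] S :=
    LinearMap.codRestrict S
      ((K₁.subtype ∘ₗ σ.symm.toLinearMap ∘ₗ P₂').prod (K₂.subtype ∘ₗ P₂')) (fun u => by
      refine (hS _).mpr ?_
      simpa using hσsymm (P₂' u))
  have hA1 : ∀ u : U₁, ((A₁ u : S) : U₁ × U₂) = (u - ((P₁' u : K₁) : U₁), 0) := fun _ => rfl
  have hA2 : ∀ u : U₂, ((A₂ u : S) : U₁ × U₂) = (0, u - ((P₂' u : K₂) : U₂)) := fun _ => rfl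
  have hB1 : ∀ u : U₁, ((B₁ u : S) : U₁ × U₂)
      = (((P₁' u : K₁) : U₁), ((σ (P₁' u) : K₂) : U₂)) := fun _ => rfl
  have hB2 : ∀ u : U₂, ((B₂ u : S) : U₁ × U₂)
      = (((σ.symm (P₂' u) : K₁) : U₁), ((P₂' u : K₂) : U₂)) := fun _ => rfl
  have hP₁ : ∀ u : U₁, P₁' u = Submodule.orthogonalProjectionOnto K₁ u := fun _ => rfl
  have hP₂ : ∀ u : U₂, P₂' u = Submodule.orthogonalProjectionOnto K₂ u := fun _ => rfl
  have hid₁ : ∀ v : K₁, P₁' (v : U₁) = v := fun v =>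
    Submodule.orthogonalProjectionOnto_mem_subspace_eq_self v
  have hid₂ : ∀ v : K₂, P₂' (v : U₂) = v := fun v =>
    Submodule.orthogonalProjectionOnto_mem_subspace_eq_self v
  have hFsurj : ∀ ψ : Module.Dual ℝ S, ∃ φ ∈ C, F φ = ψ := by
    intro ψ
    refine ⟨(ψ ∘ₗ A₁ + (2:ℝ)⁻¹ • (ψ ∘ₗ B₁), ψ ∘ₗ A₂ + (2:ℝ)⁻¹ • (ψ ∘ₗ B₂)), ?_, ?_⟩
    · refine (hC _).mpr ?_
      intro p hp
      have hAzero₁ : A₁ ((Submodule.orthogonalProjectionOnto K₁ p.1 : K₁) : U₁) = 0 := by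
        apply Subtype.ext
        rw [hA1, hid₁]
        simp
      have hAzero₂ : A₂ ((Submodule.orthogonalProjectionOnto K₂ p.2 : K₂) : U₂) = 0 := by
        apply Subtype.ext
        rw [hA2, hid₂]
        simp
      have hBeq : B₁ ((Submodule.orthogonalProjectionOnto K₁ p.1 : K₁) : U₁)
          = B₂ ((Submodule.orthogonalProjectionOnto K₂ p.2 : K₂) : U₂) := by
        apply Subtype.ext
        rw [hB1, hB2, hid₁, hid₂, ← hσS p hp, σ.symm_apply_apply]
      change (ψ ∘ₗ A₁ + (2:ℝ)⁻¹ • (ψ ∘ₗ B₁)) ((Submodule.orthogonalProjectionOnto K₁ p.1 : K₁) : U₁) =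
        (ψ ∘ₗ A₂ + (2:ℝ)⁻¹ • (ψ ∘ₗ B₂)) ((Submodule.orthogonalProjectionOnto K₂ p.2 : K₂) : U₂)
      simp only [LinearMap.add_apply, LinearMap.comp_apply, LinearMap.smul_apply,
        smul_eq_mul, hAzero₁, hAzero₂, map_zero, hBeq]
    · ext p
      have hsp : σ (P₁' (p : U₁ × U₂).1) = P₂' (p : U₁ × U₂).2 := by
        rw [hP₁, hP₂]
        exact hσS (p : U₁ × U₂) p.2
      have hBeq : B₂ (p : U₁ × U₂).2 = B₁ (p : U₁ × U₂).1 := by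
        apply Subtype.ext
        rw [hB1, hB2, ← hsp, σ.symm_apply_apply]
      have hsum : A₁ (p : U₁ × U₂).1 + A₂ (p : U₁ × U₂).2 + B₁ (p : U₁ × U₂).1 = p := by
        apply Subtype.ext
        rw [Submodule.coe_add, Submodule.coe_add, hA1, hA2, hB1]
        apply Prod.ext
        · simp only [Prod.fst_add]
          abel
        · simp only [Prod.snd_add]
          rw [hsp]
          abel
      have hψ : ψ (A₁ (p : U₁ × U₂).1) + ψ (A₂ (p : U₁ × U₂).2)
          + ψ (B₁ (p : U₁ × U₂).1) = ψ p := by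
        rw [← map_add, ← map_add, hsum]
      rw [hFapp]
      simp only [LinearMap.add_apply, LinearMap.comp_apply, LinearMap.smul_apply,
        smul_eq_mul, hBeq]
      linarith
  have hinj : Function.Injective (F.comp C.subtype) := by
    rw [injective_iff_map_eq_zero]
    intro φ h
    exact Subtype.ext (hFinj φ φ.2 h)
  have hsurj : Function.Surjective (F.comp C.subtype) := by
    intro ψ
    obtain ⟨φ, hφC, hφ⟩ := hFsurj ψ
    exact ⟨⟨φ, hφC⟩, hφ⟩
  refine ⟨LinearEquiv.ofBijective (F.comp C.subtype) ⟨hinj, hsurj⟩, ?_⟩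
  intro φ p
  rfl
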